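/- For every n ∈ ℤ, F_n(D) = D; consequently, for every n ∈ ℤ the sequence m ↦ Q_{m,n} satisfies: Q_{m,n}² = 1 for all m, Q_{m+3,n} = D·Q_{m,n}·D⁻¹ for all m, Q_{m+2,n}·Q_{m+1,n}·Q_{m,n} = D for all m, and the set {Q_{0,n}, Q_{1,n}, Q_{2,n}} generates G. -/

import Mathlib

/-- The relators of the presentation ⟨A, B, C | A² = B² = C² = 1⟩. -/
def rels : Set (FreeGroup (Fin 3)) :=
  {FreeGroup.of 0 * FreeGroup.of 0, FreeGroup.of 1 * FreeGroup.of 1,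
   FreeGroup.of 2 * FreeGroup.of 2}

/-- `G` is the group ⟨A, B, C | A² = B² = C² = 1⟩, the free product of three copies of ℤ/2. -/
abbrev G : Type := PresentedGroup rels

def A : G := PresentedGroup.of 0
def B : G := PresentedGroup.of 1
def C : G := PresentedGroup.of 2

/-- The distinguished element `D = C·B·A`. -/
def D : G := C * B * A

/-!
R and L both fix D = C·B·A: R sends C·B·A to B·(B·C·B⁻¹)·A and L sends it to C·(B·A·B⁻¹)·B, and
B² = 1. Each F n is a product of the f k and their inverses, so it lies in the stabilizer of D.

The sequence P is determined by P 0, P 1, P 2 = A, B, C and the shift rule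
P (m + 3q) = D^q · P m · D^(-q). The relations P m ² = 1 and P (m+2) · P (m+1) · P m = D are
invariant under conjugation by D, so it suffices to check them for m = 0, 1, 2. The automorphism
F (n - 1) carries P to Q; since it fixes D, it preserves all three relations, and it maps the
generating set {A, B, C} onto {Q 0 n, Q 1 n, Q 2 n}.
-/

lemma A_mul_self : A * A = 1 :=
  (QuotientGroup.eq_one_iff _).mpr (Subgroup.subset_normalClosure (by simp [rels]))

lemma B_mul_self : B * B = 1 :=
  (QuotientGroup.eq_one_iff _).mpr (Subgroup.subset_normalClosure (by simp [rels]))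

lemma C_mul_self : C * C = 1 :=
  (QuotientGroup.eq_one_iff _).mpr (Subgroup.subset_normalClosure (by simp [rels]))

lemma A_inv : A⁻¹ = A := inv_eq_of_mul_eq_one_right A_mul_self

lemma B_inv : B⁻¹ = B := inv_eq_of_mul_eq_one_right B_mul_self

lemma C_inv : C⁻¹ = C := inv_eq_of_mul_eq_one_right C_mul_self

lemma A_mul_A_mul (x : G) : A * (A * x) = x := by rw [← mul_assoc, A_mul_self, one_mul]

lemma B_mul_B_mul (x : G) : B * (B * x) = x := by rw [← mul_assoc, B_mul_self, one_mul]

lemma D_inv : D⁻¹ = A * B * C := by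
  simp only [D, mul_inv_rev, A_inv, B_inv, C_inv, mul_assoc]

lemma closure_A_B_C : Subgroup.closure {A, B, C} = ⊤ := by
  rw [← top_le_iff, ← PresentedGroup.closure_range_of rels]
  refine Subgroup.closure_mono ?_
  rintro x ⟨i, rfl⟩
  fin_cases i <;> simp [A, B, C]

lemma D_mul_A_mul_D_inv_mul_C_mul_B : D * A * D⁻¹ * C * B = D := by
  rw [D_inv]
  simp only [D, mul_assoc, A_mul_self, B_mul_self, C_mul_self, mul_one]

lemma D_mul_B_mul_A_mul_D_inv_mul_C : D * B * A * D⁻¹ * C = D := by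
  rw [D_inv]
  simp only [D, mul_assoc, A_mul_A_mul, B_mul_B_mul, C_mul_self, mul_one]

section Moves

variable {E : Type*} [FunLike E G G] [MonoidHomClass E G G] (φ : E)

lemma map_D_of_right_move (hA : φ A = A) (hB : φ B = B * C * B⁻¹) (hC : φ C = B) :
    φ D = D := by
  simp [D, hA, hB, hC, B_inv, B_mul_B_mul, mul_assoc]

lemma map_D_of_left_move (hA : φ A = B) (hB : φ B = B * A * B⁻¹) (hC : φ C = C) :
    φ D = D := by
  simp [D, hA, hB, hC, B_inv, B_mul_self, mul_assoc]

end Moves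

lemma Subgroup.mem_of_eq_pred_mul {M : Type*} [Group M] (S : Subgroup M) {F f : ℤ → M}
    (hF0 : F 0 ∈ S) (hF : ∀ n, F n = F (n - 1) * f n) (hf : ∀ n, f n ∈ S) (n : ℤ) :
    F n ∈ S := by
  induction n using Int.induction_on with
  | zero => exact hF0
  | succ k ih => rw [hF, add_sub_cancel_right]; exact S.mul_mem ih (hf _)
  | pred k ih =>
    rw [eq_mul_inv_of_mul_eq (hF (-k)).symm]
    exact S.mul_mem ih (S.inv_mem (hf _))

lemma Subgroup.closure_image_eq_top {H K : Type*} [Group H] [Group K] (e : H ≃* K)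
    {s : Set H} (hs : Subgroup.closure s = ⊤) : Subgroup.closure (e '' s) = ⊤ := by
  have := MonoidHom.map_closure e.toMonoidHom s
  rw [MulEquiv.coe_toMonoidHom] at this
  rw [← this, hs]
  exact Subgroup.map_top_of_surjective _ e.surjective

section ConjShift

variable {P : ℤ → G}

lemma P_add_three_mul
    (hP0 : ∀ m : ℤ, P (3 * m) = D ^ m * A * (D ^ m)⁻¹)
    (hP1 : ∀ m : ℤ, P (3 * m + 1) = D ^ m * B * (D ^ m)⁻¹)
    (hP2 : ∀ m : ℤ, P (3 * m + 2) = D ^ m * C * (D ^ m)⁻¹) (m q : ℤ) :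
    P (m + 3 * q) = MulAut.conj (D ^ q) (P m) := by
  obtain ⟨k, j, hj, rfl⟩ : ∃ k j : ℤ, (j = 0 ∨ j = 1 ∨ j = 2) ∧ m = 3 * k + j :=
    ⟨m / 3, m % 3, by omega, by omega⟩
  rw [MulAut.conj_apply]
  rcases hj with rfl | rfl | rfl
  · rw [add_zero, ← mul_add, hP0, hP0]; group
  · rw [show 3 * k + 1 + 3 * q = 3 * (k + q) + 1 by ring, hP1, hP1]; group
  · rw [show 3 * k + 2 + 3 * q = 3 * (k + q) + 2 by ring, hP2, hP2]; group

lemma exists_eq_conj_of_conj_shift (hP : ∀ m q : ℤ, P (m + 3 * q) = MulAut.conj (D ^ q) (P m))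
    (m : ℤ) : ∃ j k : ℤ, (j = 0 ∨ j = 1 ∨ j = 2) ∧
      ∀ i, P (m + i) = MulAut.conj (D ^ k) (P (j + i)) :=
  ⟨m % 3, m / 3, by omega, fun i => by
    rw [← hP, add_right_comm, Int.emod_add_mul_ediv]⟩

lemma sq_eq_one_of_conj_shift (h0 : P 0 = A) (h1 : P 1 = B) (h2 : P 2 = C)
    (hP : ∀ m q : ℤ, P (m + 3 * q) = MulAut.conj (D ^ q) (P m)) (m : ℤ) : P m ^ 2 = 1 := by
  obtain ⟨j, k, hj, hm⟩ := exists_eq_conj_of_conj_shift hP m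
  rw [← add_zero m, hm, ← map_pow, add_zero]
  rcases hj with rfl | rfl | rfl
  · rw [h0, sq, A_mul_self, map_one]
  · rw [h1, sq, B_mul_self, map_one]
  · rw [h2, sq, C_mul_self, map_one]

lemma mul_mul_eq_D_of_conj_shift (h0 : P 0 = A) (h1 : P 1 = B) (h2 : P 2 = C)
    (hP : ∀ m q : ℤ, P (m + 3 * q) = MulAut.conj (D ^ q) (P m)) (m : ℤ) :
    P (m + 2) * P (m + 1) * P m = D := by
  have h3 : P 3 = D * A * D⁻¹ := by simpa [h0] using hP 0 1
  have h4 : P 4 = D * B * D⁻¹ := by simpa [h1] using hP 1 1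
  obtain ⟨j, k, hj, hm⟩ := exists_eq_conj_of_conj_shift hP m
  have base : P (j + 2) * P (j + 1) * P (j + 0) = D := by
    rcases hj with rfl | rfl | rfl
    · simp only [zero_add, h0, h1, h2]; rfl
    · norm_num only [h1, h2, h3]
      simpa only [mul_assoc] using D_mul_A_mul_D_inv_mul_C_mul_B
    · norm_num only [h2, h3, h4]
      simpa only [mul_assoc, inv_mul_cancel_left] using D_mul_B_mul_A_mul_D_inv_mul_C
  rw [hm 2, hm 1, ← add_zero m, hm 0, ← map_mul, ← map_mul, base, MulAut.conj_apply]
  group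

end ConjShift

theorem stmt9_general
    (R L : MulAut G)
    (hRA : R A = A) (hRB : R B = B * C * B⁻¹) (hRC : R C = B)
    (hLA : L A = B) (hLB : L B = B * A * B⁻¹) (hLC : L C = C)
    (P : ℤ → G)
    (hP0 : ∀ m : ℤ, P (3 * m) = D ^ m * A * (D ^ m)⁻¹)
    (hP1 : ∀ m : ℤ, P (3 * m + 1) = D ^ m * B * (D ^ m)⁻¹)
    (hP2 : ∀ m : ℤ, P (3 * m + 2) = D ^ m * C * (D ^ m)⁻¹)
    (f : ℤ → MulAut G) (hfRL : ∀ n : ℤ, f n = R ∨ f n = L)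
    (F : ℤ → MulAut G) (hF0 : F 0 = 1) (hF : ∀ n : ℤ, F n = F (n - 1) * f n)
    (Q : ℤ → ℤ → G) (hQ : ∀ m n : ℤ, Q m n = F (n - 1) (P m)) :
    (∀ n : ℤ, F n D = D) ∧
    ∀ n : ℤ,
      (∀ m : ℤ, Q m n ^ 2 = 1) ∧
      (∀ m : ℤ, Q (m + 3) n = D * Q m n * D⁻¹) ∧
      (∀ m : ℤ, Q (m + 2) n * Q (m + 1) n * Q m n = D) ∧
      Subgroup.closure {Q 0 n, Q 1 n, Q 2 n} = ⊤ := by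
  have hfD (n : ℤ) : f n ∈ MulAction.stabilizer (MulAut G) D := by
    rcases hfRL n with h | h <;> rw [h, MulAction.mem_stabilizer_iff, MulAut.smul_def]
    exacts [map_D_of_right_move R hRA hRB hRC, map_D_of_left_move L hLA hLB hLC]
  have hFD (n : ℤ) : F n D = D :=
    Subgroup.mem_of_eq_pred_mul _ (by rw [hF0]; exact one_smul _ D) hF hfD n
  have hshift := P_add_three_mul hP0 hP1 hP2
  have h0 : P 0 = A := by simpa using hP0 0
  have h1 : P 1 = B := by simpa using hP1 0
  have h2 : P 2 = C := by simpa using hP2 0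
  refine ⟨hFD, fun n => ⟨fun m => ?_, fun m => ?_, fun m => ?_, ?_⟩⟩
  · rw [hQ, ← map_pow, sq_eq_one_of_conj_shift h0 h1 h2 hshift, map_one]
  · have hP3 : P (m + 3) = D * P m * D⁻¹ := by simpa using hshift m 1
    rw [hQ, hQ, hP3, map_mul, map_mul, map_inv, hFD]
  · rw [hQ, hQ, hQ, ← map_mul, ← map_mul, mul_mul_eq_D_of_conj_shift h0 h1 h2 hshift, hFD]
  · have himage : ({Q 0 n, Q 1 n, Q 2 n} : Set G) = F (n - 1) '' {A, B, C} := by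
      simp only [Set.image_insert_eq, Set.image_singleton, hQ, h0, h1, h2]
    rw [himage]
    exact Subgroup.closure_image_eq_top _ closure_A_B_C

/-- F_n(D) = D for all n, and the sequence m ↦ Q_{m,n} is a sequence of elliptic
generators: each Q_{m,n} squares to 1, conjugation by D shifts the index by 3,
consecutive triples multiply (in reverse) to D, and {Q_{0,n}, Q_{1,n}, Q_{2,n}}
generates G. -/
theorem stmt9
    (R L : MulAut G)
    (hRA : R A = A) (hRB : R B = B * C * B⁻¹) (hRC : R C = B)
    (hLA : L A = B) (hLB : L B = B * A * B⁻¹) (hLC : L C = C)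
    (P : ℤ → G)
    (hP0 : ∀ m : ℤ, P (3 * m) = D ^ m * A * (D ^ m)⁻¹)
    (hP1 : ∀ m : ℤ, P (3 * m + 1) = D ^ m * B * (D ^ m)⁻¹)
    (hP2 : ∀ m : ℤ, P (3 * m + 2) = D ^ m * C * (D ^ m)⁻¹)
    (p : ℤ) (hp : 2 ≤ p)
    (f : ℤ → MulAut G) (hfRL : ∀ n : ℤ, f n = R ∨ f n = L)
    (hfper : ∀ n : ℤ, f (n + p) = f n) (hf0 : f 0 = L) (hf1 : f 1 = R)
    (F : ℤ → MulAut G) (hF0 : F 0 = 1) (hF : ∀ n : ℤ, F n = F (n - 1) * f n)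
    (Q : ℤ → ℤ → G) (hQ : ∀ m n : ℤ, Q m n = F (n - 1) (P m)) :
    (∀ n : ℤ, F n D = D) ∧
    ∀ n : ℤ,
      (∀ m : ℤ, Q m n ^ 2 = 1) ∧
      (∀ m : ℤ, Q (m + 3) n = D * Q m n * D⁻¹) ∧
      (∀ m : ℤ, Q (m + 2) n * Q (m + 1) n * Q m n = D) ∧
      Subgroup.closure {Q 0 n, Q 1 n, Q 2 n} = ⊤ :=
  stmt9_general R L hRA hRB hRC hLA hLB hLC P hP0 hP1 hP2 f hfRL F hF0 hF Q hQ
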